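/- arXiv:math/0404200 — 8 statements merged into one kernel-verified Lean document; each statement's English description precedes it below -/
import Mathlib

section
/- Let E be a finite set and C a collection of r-element subsets of E such that |C ⊕ C'| > 2 for all distinct C, C' ∈ C (where ⊕ is symmetric difference). Then the collection B of all r-element subsets of E not in C forms the set of bases of a matroid on E (assuming r ≤ |E| and B is nonempty). -/
open scoped symmDiff

variable {α : Type*} [DecidableEq α]

/-- `B` is the collection of bases of a matroid of rank `r` on ground set `E`. -/
def MatroidBases (E : Finset α) (r : ℕ) (B : Finset (Finset α)) : Prop :=
  B.Nonempty ∧ (∀ X ∈ B, X ⊆ E ∧ X.card = r) ∧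
    ∀ X ∈ B, ∀ Y ∈ B, ∀ e ∈ X, ∃ f ∈ Y, insert f (X.erase e) ∈ B

/-- A set is independent if it is contained in some basis. -/
def Indep (B : Finset (Finset α)) (X : Finset α) : Prop := ∃ Y ∈ B, X ⊆ Y

/-- A circuit is a minimal dependent subset of the ground set. -/
def Circuit (E : Finset α) (B : Finset (Finset α)) (C : Finset α) : Prop :=
  C ⊆ E ∧ ¬ Indep B C ∧ ∀ x ∈ C, Indep B (C.erase x)

/-- A paving matroid of rank `r`: every `(r-1)`-element subset of the ground set is independent. -/
def IsPaving (E : Finset α) (r : ℕ) (B : Finset (Finset α)) : Prop :=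
  MatroidBases E r B ∧ ∀ X ⊆ E, X.card = r - 1 → Indep B X

/-- A sparse paving matroid: a paving matroid in which any two distinct circuits of size `r`
have symmetric difference of size greater than 2. -/
def IsSparsePaving (E : Finset α) (r : ℕ) (B : Finset (Finset α)) : Prop :=
  IsPaving E r B ∧ ∀ C C' : Finset α, Circuit E B C → Circuit E B C' → C.card = r →
    C'.card = r → C ≠ C' → 2 < (C ∆ C').card

theorem stmt0 (E : Finset α) (r : ℕ) (C : Finset (Finset α))
    (hC : ∀ c ∈ C, c ⊆ E ∧ c.card = r)
    (hsparse : ∀ c ∈ C, ∀ c' ∈ C, c ≠ c' → 2 < (c ∆ c').card)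
    (hr : r ≤ E.card)
    (B : Finset (Finset α))
    (hB : B = (E.powersetCard r).filter (fun X => X ∉ C))
    (hBne : B.Nonempty) :
    MatroidBases E r B := by
  subst hB
  refine ⟨hBne, ?_, ?_⟩
  · intro X hX
    simp only [Finset.mem_filter, Finset.mem_powersetCard] at hX
    exact hX.1
  · intro X hX Y hY e he
    simp only [Finset.mem_filter, Finset.mem_powersetCard] at hX hY ⊢
    obtain ⟨⟨hXE, hXc⟩, hXC⟩ := hX
    obtain ⟨⟨hYE, hYc⟩, hYC⟩ := hY
    by_cases heY : e ∈ Y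
    · exact ⟨e, heY, by rw [Finset.insert_erase he]; exact ⟨⟨hXE, hXc⟩, hXC⟩⟩
    have hmem : ∀ f ∈ Y \ X, insert f (X.erase e) ⊆ E ∧ (insert f (X.erase e)).card = r := by
      intro f hf
      obtain ⟨hfY, hfX⟩ := Finset.mem_sdiff.mp hf
      refine ⟨?_, ?_⟩
      · intro x hx
        rcases Finset.mem_insert.mp hx with rfl | hx
        · exact hYE hfY
        · exact hXE (Finset.mem_of_mem_erase hx)
      · rw [Finset.card_insert_of_notMem (fun h => hfX (Finset.mem_of_mem_erase h)),
          Finset.card_erase_of_mem he, hXc]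
        have : 1 ≤ r := by
          rw [← hXc]; exact Finset.card_pos.mpr ⟨e, he⟩
        omega
    by_cases hgood : ∃ f ∈ Y \ X, insert f (X.erase e) ∉ C
    · obtain ⟨f, hf, hfC⟩ := hgood
      exact ⟨f, (Finset.mem_sdiff.mp hf).1, hmem f hf, hfC⟩
    push_neg at hgood
    have hcard : (Y \ X).card = (X \ Y).card := by
      have h1 := Finset.card_sdiff_add_card_inter Y X
      have h2 := Finset.card_sdiff_add_card_inter X Y
      rw [Finset.inter_comm] at h2
      omega
    have heXY : e ∈ X \ Y := Finset.mem_sdiff.mpr ⟨he, heY⟩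
    have h1 : 1 ≤ (Y \ X).card := by
      rw [hcard]; exact Finset.card_pos.mpr ⟨e, heXY⟩
    rcases eq_or_lt_of_le h1 with h1 | h2
    · -- |Y \ X| = 1, so X \ Y = {e} and Y = insert f (X.erase e)
      obtain ⟨f, hf⟩ := Finset.card_eq_one.mp h1.symm
      have hfYX : f ∈ Y \ X := by rw [hf]; exact Finset.mem_singleton_self f
      obtain ⟨hfY, hfX⟩ := Finset.mem_sdiff.mp hfYX
      have hsub : insert f (X.erase e) ⊆ Y := by
        intro x hx
        rcases Finset.mem_insert.mp hx with rfl | hx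
        · exact hfY
        · obtain ⟨hxe, hxX⟩ := Finset.mem_erase.mp hx
          by_contra hxY
          have hxXY : x ∈ X \ Y := Finset.mem_sdiff.mpr ⟨hxX, hxY⟩
          have : (X \ Y).card = 1 := by omega
          obtain ⟨y, hy⟩ := Finset.card_eq_one.mp this
          rw [hy, Finset.mem_singleton] at hxXY
          rw [hy, Finset.mem_singleton] at heXY
          exact hxe (hxXY.trans heXY.symm)
      have heq : insert f (X.erase e) = Y :=
        Finset.eq_of_subset_of_card_le hsub (by rw [hYc, (hmem f hfYX).2])
      exact ⟨f, hfY, by rw [heq]; exact ⟨⟨hYE, hYc⟩, hYC⟩⟩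
    · -- |Y \ X| ≥ 2 : contradiction with sparsity
      exfalso
      obtain ⟨f, hf, f', hf', hne⟩ := Finset.one_lt_card.mp h2
      obtain ⟨hfY, hfX⟩ := Finset.mem_sdiff.mp hf
      obtain ⟨hf'Y, hf'X⟩ := Finset.mem_sdiff.mp hf'
      set Z := insert f (X.erase e) with hZ
      set Z' := insert f' (X.erase e) with hZ'
      have hZC : Z ∈ C := hgood f hf
      have hZ'C : Z' ∈ C := hgood f' hf'
      have hZne : Z ≠ Z' := by
        intro h
        have : f ∈ Z' := h ▸ Finset.mem_insert_self f (X.erase e)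
        rcases Finset.mem_insert.mp this with h' | h'
        · exact hne h'
        · exact hfX (Finset.mem_of_mem_erase h')
      have hsd : Z ∆ Z' ⊆ {f, f'} := by
        intro x hx
        rw [Finset.mem_symmDiff] at hx
        rcases hx with ⟨hx1, hx2⟩ | ⟨hx1, hx2⟩
        · rcases Finset.mem_insert.mp hx1 with rfl | h'
          · exact Finset.mem_insert_self x {f'}
          · exact absurd (Finset.mem_insert_of_mem h') hx2
        · rcases Finset.mem_insert.mp hx1 with rfl | h'
          · exact Finset.mem_insert_of_mem (Finset.mem_singleton_self x)
          · exact absurd (Finset.mem_insert_of_mem h') hx2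
      have hle : (Z ∆ Z').card ≤ 2 :=
        le_trans (Finset.card_le_card hsd) ((Finset.card_insert_le f {f'}).trans (by simp))
      exact absurd (hsparse Z hZC Z' hZ'C hZne) (by omega)
end

section
/- Let M be a matroid of rank r on a finite ground set E, and let C_r be a collection of r-element subsets of E defining a paving matroid. Then C_r defines a paving matroid on E if and only if: for all C, C' ∈ C_r with |C ⊕ C'| = 2, every r-element subset of C ∪ C' is in C_r. -/
open scoped symmDiff

variable {α : Type*} [DecidableEq α]

lemma keyA (r : ℕ) (Cr : Finset (Finset α))
    (hclosure : ∀ C ∈ Cr, ∀ C' ∈ Cr, (C ∆ C').card = 2 →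
        ∀ X ⊆ C ∪ C', X.card = r → X ∈ Cr)
    (X' S : Finset α) (hX' : X'.card = r - 1) (hr : 0 < r)
    (hS : ∀ f ∈ S, f ∉ X' → insert f X' ∈ Cr) :
    ∀ k (W : Finset α), W ⊆ X' ∪ S → W.card = r - 1 → (W \ X').card = k →
      ∀ h ∈ S, h ∉ X' → h ∉ W → insert h W ∈ Cr := by
  intro k
  induction k with
  | zero =>
    intro W hWsub hWcard hWd h hhS hhX' hhW
    have hWX' : W = X' := by
      apply Finset.eq_of_subset_of_card_le
      · intro x hx
        by_contra hxX'
        have : x ∈ W \ X' := Finset.mem_sdiff.2 ⟨hx, hxX'⟩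
        simp [Finset.card_eq_zero.1 hWd] at this
      · omega
    rw [hWX']; exact hS h hhS hhX'
  | succ k ih =>
    intro W hWsub hWcard hWd h hhS hhX' hhW
    obtain ⟨a, ha⟩ : (W \ X').Nonempty := Finset.card_pos.1 (by omega)
    have haW : a ∈ W := (Finset.mem_sdiff.1 ha).1
    have haX' : a ∉ X' := (Finset.mem_sdiff.1 ha).2
    have haS : a ∈ S := by
      rcases Finset.mem_union.1 (hWsub haW) with h1 | h1
      · exact absurd h1 haX'
      · exact h1
    have hXWcard : (X' \ W).Nonempty := by
      apply Finset.card_pos.1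
      have h1 := Finset.card_sdiff_add_card_inter X' W
      have h2 := Finset.card_sdiff_add_card_inter W X'
      rw [Finset.inter_comm] at h2
      omega
    obtain ⟨b, hb⟩ := hXWcard
    have hbX' : b ∈ X' := (Finset.mem_sdiff.1 hb).1
    have hbW : b ∉ W := (Finset.mem_sdiff.1 hb).2
    set W₁ : Finset α := insert b (W.erase a) with hW₁
    have hbWe : b ∉ W.erase a := fun hc => hbW (Finset.mem_of_mem_erase hc)
    have hW₁card : W₁.card = r - 1 := by
      have hW1 : 1 ≤ W.card := Finset.card_pos.2 ⟨a, haW⟩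
      rw [hW₁, Finset.card_insert_of_notMem hbWe, Finset.card_erase_of_mem haW]
      omega
    have hW₁sub : W₁ ⊆ X' ∪ S := by
      intro x hx
      rcases Finset.mem_insert.1 hx with rfl | hx
      · exact Finset.mem_union_left _ hbX'
      · exact hWsub (Finset.mem_of_mem_erase hx)
    have hW₁d : (W₁ \ X').card = k := by
      have : W₁ \ X' = (W \ X').erase a := by
        ext x
        simp only [hW₁, Finset.mem_sdiff, Finset.mem_insert, Finset.mem_erase]
        constructor
        · rintro ⟨rfl | hx, hxX'⟩
          · exact absurd hbX' hxX'
          · exact ⟨hx.1, hx.2, hxX'⟩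
        · rintro ⟨hxa, hxW, hxX'⟩
          exact ⟨Or.inr ⟨hxa, hxW⟩, hxX'⟩
      rw [this, Finset.card_erase_of_mem ha, hWd]
      omega
    have haW₁ : a ∉ W₁ := by
      simp only [hW₁, Finset.mem_insert, Finset.mem_erase]
      rintro (rfl | ⟨hc, _⟩)
      · exact haX' hbX'
      · exact hc rfl
    have hhW₁ : h ∉ W₁ := by
      simp only [hW₁, Finset.mem_insert, Finset.mem_erase]
      rintro (rfl | ⟨_, hc⟩)
      · exact hhX' hbX'
      · exact hhW (Finset.mem_of_mem_erase (Finset.mem_erase.2 ⟨by assumption, hc⟩))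
    have hC : insert h W₁ ∈ Cr := ih W₁ hW₁sub hW₁card hW₁d h hhS hhX' hhW₁
    have hC' : insert a W₁ ∈ Cr := ih W₁ hW₁sub hW₁card hW₁d a haS haX' haW₁
    have hha : h ≠ a := fun hc => hhW (hc ▸ haW)
    have hsd : ((insert h W₁) ∆ (insert a W₁)).card = 2 := by
      have : (insert h W₁) ∆ (insert a W₁) = {h, a} := by
        ext x
        simp only [symmDiff_def, Finset.sup_eq_union, Finset.mem_union, Finset.mem_sdiff,
          Finset.mem_insert, Finset.mem_singleton]
        constructor
        · rintro (⟨rfl | hx, hx2⟩ | ⟨rfl | hx, hx2⟩)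
          · simp
          · exact absurd (Or.inr hx) hx2
          · simp
          · exact absurd (Or.inr hx) hx2
        · rintro (rfl | rfl)
          · exact Or.inl ⟨Or.inl rfl, by push_neg; exact ⟨hha, hhW₁⟩⟩
          · exact Or.inr ⟨Or.inl rfl, by push_neg; exact ⟨hha.symm, haW₁⟩⟩
      rw [this, Finset.card_insert_of_notMem (by simp [hha]), Finset.card_singleton]
    refine hclosure _ hC _ hC' hsd _ ?_ ?_
    · intro x hx
      rcases Finset.mem_insert.1 hx with rfl | hx
      · exact Finset.mem_union_left _ (Finset.mem_insert_self _ _)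
      · rcases Finset.decidableMem x (W.erase a) with hxe | hxe
        · by_cases hxa : x = a
          · exact Finset.mem_union_right _ (hxa ▸ Finset.mem_insert_self _ _)
          · exact Finset.mem_union_left _ (Finset.mem_insert_of_mem
              (Finset.mem_insert_of_mem (Finset.mem_erase.2 ⟨hxa, hx⟩)))
        · exact Finset.mem_union_left _ (Finset.mem_insert_of_mem
            (Finset.mem_insert_of_mem hxe))
    · rw [Finset.card_insert_of_notMem hhW, hWcard]; omega

lemma keyB (r : ℕ) (Cr : Finset (Finset α))
    (hclosure : ∀ C ∈ Cr, ∀ C' ∈ Cr, (C ∆ C').card = 2 →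
        ∀ X ⊆ C ∪ C', X.card = r → X ∈ Cr)
    (X' : Finset α) (hX' : X'.card = r - 1) (hr : 0 < r)
    (Y : Finset α) (hY : Y.card = r)
    (hS : ∀ f ∈ Y, f ∉ X' → insert f X' ∈ Cr) : Y ∈ Cr := by
  obtain ⟨h, hhY, hhX'⟩ : ∃ h ∈ Y, h ∉ X' := by
    by_contra hc
    push_neg at hc
    have := Finset.card_le_card hc
    omega
  have := keyA r Cr hclosure X' Y hX' hr hS ((Y.erase h \ X').card) (Y.erase h)
    (fun x hx => Finset.mem_union_right _ (Finset.mem_of_mem_erase hx))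
    (by rw [Finset.card_erase_of_mem hhY, hY])
    rfl h hhY hhX' (Finset.notMem_erase h Y)
  rwa [Finset.insert_erase hhY] at this

/-- Oxley's characterisation of paving matroids (Prop. 1.3.10):
a collection `Cr` of `r`-element subsets of `E` is the set of size-`r` circuits of a
paving matroid on `E` (whose bases are the `r`-subsets of `E` not in `Cr`) precisely if,
whenever `C, C' ∈ Cr` satisfy `|C ∆ C'| = 2`, every `r`-element subset of `C ∪ C'` is in `Cr`. -/
theorem stmt1 (E : Finset α) (r : ℕ) (Cr : Finset (Finset α))
    (hCr : ∀ c ∈ Cr, c ⊆ E ∧ c.card = r)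
    (hr : 0 < r) (hrE : r ≤ E.card)
    (B : Finset (Finset α))
    (hB : B = (E.powersetCard r).filter (fun X => X ∉ Cr))
    (hBne : B.Nonempty) :
    (IsPaving E r B ∧ ∀ c : Finset α, c ∈ Cr ↔ (Circuit E B c ∧ c.card = r)) ↔
      (∀ C ∈ Cr, ∀ C' ∈ Cr, (C ∆ C').card = 2 →
        ∀ X ⊆ C ∪ C', X.card = r → X ∈ Cr) := by
  have hmemB : ∀ X : Finset α, X ∈ B ↔ (X ⊆ E ∧ X.card = r ∧ X ∉ Cr) := by
    intro X
    simp [hB, Finset.mem_powersetCard, and_assoc]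
  constructor
  · -- forward: paving + circuits ⟹ closure condition
    rintro ⟨⟨⟨_, _, hexch⟩, hpav⟩, hcirc⟩ C hC C' hC' hsd X hXsub hXcard
    by_contra hXCr
    have hXB : X ∈ B := (hmemB X).2
      ⟨hXsub.trans (Finset.union_subset (hCr C hC).1 (hCr C' hC').1), hXcard, hXCr⟩
    -- decompose the symmetric difference
    have hCcard := (hCr C hC).2
    have hC'card := (hCr C' hC').2
    have hdisj : Disjoint (C \ C') (C' \ C) := disjoint_sdiff_sdiff
    have hsd2 : (C \ C').card + (C' \ C).card = 2 := by
      rw [← Finset.card_union_of_disjoint hdisj]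
      simpa [symmDiff_def] using hsd
    have hint : (C ∩ C').card = r - 1 := by
      have h1 := Finset.card_sdiff_add_card_inter C C'
      have h2 := Finset.card_sdiff_add_card_inter C' C
      rw [Finset.inter_comm] at h2
      omega
    obtain ⟨a, hab⟩ : ∃ a, C \ C' = {a} := by
      apply Finset.card_eq_one.1
      have h1 := Finset.card_sdiff_add_card_inter C C'
      omega
    obtain ⟨b, hba⟩ : ∃ b, C' \ C = {b} := by
      apply Finset.card_eq_one.1
      have h2 := Finset.card_sdiff_add_card_inter C' C
      rw [Finset.inter_comm] at h2
      omega
    set W := C ∩ C' with hW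
    have hCW : C = insert a W := by
      ext x
      simp only [Finset.mem_insert, hW, Finset.mem_inter]
      constructor
      · intro hx
        by_cases hx' : x ∈ C'
        · exact Or.inr ⟨hx, hx'⟩
        · exact Or.inl (Finset.mem_singleton.1 (hab ▸ Finset.mem_sdiff.2 ⟨hx, hx'⟩))
      · intro hx
        rcases hx with hx | hx
        · have hx2 : x ∈ C \ C' := by rw [hab]; exact Finset.mem_singleton.2 hx
          exact (Finset.mem_sdiff.1 hx2).1
        · exact hx.1
    have hC'W : C' = insert b W := by
      ext x
      simp only [Finset.mem_insert, hW, Finset.mem_inter]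
      constructor
      · intro hx
        by_cases hx' : x ∈ C
        · exact Or.inr ⟨hx', hx⟩
        · exact Or.inl (Finset.mem_singleton.1 (hba ▸ Finset.mem_sdiff.2 ⟨hx, hx'⟩))
      · intro hx
        rcases hx with hx | hx
        · have hx2 : x ∈ C' \ C := by rw [hba]; exact Finset.mem_singleton.2 hx
          exact (Finset.mem_sdiff.1 hx2).1
        · exact hx.2
    -- W is independent by the paving property; extend to a basis
    have hWE : W ⊆ E := (Finset.inter_subset_left).trans (hCr C hC).1
    obtain ⟨Z, hZB, hWZ⟩ := hpav W hWE hint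
    have hZcard : Z.card = r := ((hmemB Z).1 hZB).2.1
    obtain ⟨w, hwZ⟩ : ∃ w, Z \ W = {w} := by
      apply Finset.card_eq_one.1
      rw [Finset.card_sdiff_of_subset hWZ]
      omega
    have hZW : Z = insert w W := by
      ext x
      simp only [Finset.mem_insert]
      constructor
      · intro hx
        by_cases hx' : x ∈ W
        · exact Or.inr hx'
        · exact Or.inl (Finset.mem_singleton.1 (hwZ ▸ Finset.mem_sdiff.2 ⟨hx, hx'⟩))
      · intro hx
        rcases hx with hx | hx
        · have hx2 : x ∈ Z \ W := by rw [hwZ]; exact Finset.mem_singleton.2 hx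
          exact (Finset.mem_sdiff.1 hx2).1
        · exact hWZ hx
    have hwW : w ∉ W := by
      have : w ∈ Z \ W := by simp [hwZ]
      exact (Finset.mem_sdiff.1 this).2
    -- exchange from Z into X
    obtain ⟨f, hfX, hfB⟩ := hexch Z hZB X hXB w (by rw [hZW]; exact Finset.mem_insert_self _ _)
    have herase : Z.erase w = W := by rw [hZW, Finset.erase_insert hwW]
    rw [herase] at hfB
    have hfcard : (insert f W).card = r := ((hmemB _).1 hfB).2.1
    have hfnotW : f ∉ W := by
      intro hc
      rw [Finset.insert_eq_self.2 hc] at hfcard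
      omega
    have hfCC' : f ∈ C ∪ C' := hXsub hfX
    rcases Finset.mem_union.1 hfCC' with hf | hf
    · rw [hCW, Finset.mem_insert] at hf
      rcases hf with rfl | hf
      · exact ((hmemB _).1 hfB).2.2 (hCW ▸ hC)
      · exact hfnotW hf
    · rw [hC'W, Finset.mem_insert] at hf
      rcases hf with rfl | hf
      · exact ((hmemB _).1 hfB).2.2 (hC'W ▸ hC')
      · exact hfnotW hf
  · -- backward: closure condition ⟹ paving + circuits
    intro hclosure
    -- paving property
    have hpav : ∀ X ⊆ E, X.card = r - 1 → Indep B X := by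
      intro X hXE hXcard
      obtain ⟨Y, hYB⟩ := hBne
      have hYr : Y.card = r := ((hmemB Y).1 hYB).2.1
      by_contra hindep
      have : ∀ f ∈ Y, f ∉ X → insert f X ∈ Cr := by
        intro f hfY hfX
        by_contra hfCr
        have hins : insert f X ∈ B := (hmemB _).2
          ⟨Finset.insert_subset (((hmemB Y).1 hYB).1 hfY) hXE,
           by rw [Finset.card_insert_of_notMem hfX, hXcard]; omega, hfCr⟩
        exact hindep ⟨insert f X, hins, Finset.subset_insert _ _⟩
      exact ((hmemB Y).1 hYB).2.2 (keyB r Cr hclosure X hXcard hr Y hYr this)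
    -- basis exchange
    have hexch : ∀ X ∈ B, ∀ Y ∈ B, ∀ e ∈ X, ∃ f ∈ Y, insert f (X.erase e) ∈ B := by
      intro X hXB Y hYB e heX
      by_contra hc
      push_neg at hc
      have hXE := ((hmemB X).1 hXB).1
      have hXr := ((hmemB X).1 hXB).2.1
      have hYE := ((hmemB Y).1 hYB).1
      have hYr := ((hmemB Y).1 hYB).2.1
      have hXecard : (X.erase e).card = r - 1 := by
        rw [Finset.card_erase_of_mem heX, hXr]
      have : ∀ f ∈ Y, f ∉ X.erase e → insert f (X.erase e) ∈ Cr := by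
        intro f hfY hfX
        by_contra hfCr
        exact hc f hfY ((hmemB _).2
          ⟨Finset.insert_subset (hYE hfY) ((Finset.erase_subset _ _).trans hXE),
           by rw [Finset.card_insert_of_notMem hfX, hXecard]; omega, hfCr⟩)
      exact ((hmemB Y).1 hYB).2.2 (keyB r Cr hclosure (X.erase e) hXecard hr Y hYr this)
    have hpaving : IsPaving E r B :=
      ⟨⟨hBne, fun X hX => ⟨((hmemB X).1 hX).1, ((hmemB X).1 hX).2.1⟩, hexch⟩, hpav⟩
    refine ⟨hpaving, fun c => ⟨fun hc => ⟨⟨(hCr c hc).1, ?_, ?_⟩, (hCr c hc).2⟩, ?_⟩⟩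
    · -- c ∈ Cr is dependent
      rintro ⟨Z, hZB, hcZ⟩
      have : c = Z := Finset.eq_of_subset_of_card_le hcZ
        (by rw [((hmemB Z).1 hZB).2.1, (hCr c hc).2])
      exact ((hmemB Z).1 hZB).2.2 (this ▸ hc)
    · -- minimality
      intro x hx
      exact hpav _ ((Finset.erase_subset _ _).trans (hCr c hc).1)
        (by rw [Finset.card_erase_of_mem hx, (hCr c hc).2])
    · -- circuits of size r are in Cr
      rintro ⟨⟨hcE, hcdep, _⟩, hccard⟩
      by_contra hcCr
      exact hcdep ⟨c, (hmemB c).2 ⟨hcE, hccard, hcCr⟩, Finset.Subset.refl c⟩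
end

section
/- Let M be a sparse paving matroid of rank r on a ground set E of size m, let e, f ∈ E be distinct, and let B_{ef} and B_{e¬f} denote the sets of bases containing both e and f, and containing e but not f, respectively. Then (m − r − 1)·|B_{ef}| ≤ (r − 1)·|B_{e¬f}|. -/
open scoped symmDiff

variable {α : Type*} [DecidableEq α]

/-!
Double count the pairs `(X, Y)` with `X ∈ B_{ef}`, `Y ∈ B_{e¬f}` and `X.erase f ⊆ Y`, i.e. the
edges of the basis-exchange graph between the two classes. From `X`, each of the `m - r` sets
`insert g (X.erase f)` with `g ∉ X` is a basis unless it is an `r`-circuit, and sparseness allows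
at most one such circuit, since two of them differ in only two elements. Towards `Y`, such an `X`
is `insert f (Y.erase g)` for some `g ∈ Y` other than `e`, which leaves `r - 1` choices.
-/

open Finset

lemma MatroidBases.mem_of_indep {E : Finset α} {r : ℕ} {B : Finset (Finset α)}
    (hM : MatroidBases E r B) {S : Finset α} (hS : Indep B S) (hcard : S.card = r) : S ∈ B := by
  obtain ⟨Y, hY, hSY⟩ := hS
  rwa [eq_of_subset_of_card_le hSY (by rw [hcard, (hM.2.1 Y hY).2])]

lemma IsPaving.circuit_of_notMem {E : Finset α} {r : ℕ} {B : Finset (Finset α)}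
    (hP : IsPaving E r B) {S : Finset α} (hSE : S ⊆ E) (hcard : S.card = r) (hS : S ∉ B) :
    Circuit E B S :=
  ⟨hSE, fun hind => hS (hP.1.mem_of_indep hind hcard), fun x hx =>
    hP.2 _ ((erase_subset x S).trans hSE) (by rw [card_erase_of_mem hx, hcard])⟩

lemma symmDiff_insert_insert_subset (s : Finset α) (a b : α) :
    insert a s ∆ insert b s ⊆ {a, b} := by
  intro x
  simp only [mem_symmDiff, mem_insert, mem_singleton]
  tauto

lemma IsSparsePaving.card_filter_exchange_notMem_le_one {E : Finset α} {r : ℕ}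
    {B : Finset (Finset α)} (hM : IsSparsePaving E r B) {X : Finset α} (hX : X ∈ B) {f : α}
    (hfX : f ∈ X) : ((E \ X).filter (fun g => insert g (X.erase f) ∉ B)).card ≤ 1 := by
  obtain ⟨hXE, hXr⟩ := hM.1.1.2.1 X hX
  have hcircuit : ∀ g ∈ (E \ X).filter (fun g => insert g (X.erase f) ∉ B),
      Circuit E B (insert g (X.erase f)) ∧ (insert g (X.erase f)).card = r := by
    intro g hg
    simp only [mem_filter, mem_sdiff] at hg
    have hcard : (insert g (X.erase f)).card = r := by
      rw [card_insert_of_notMem (fun h => hg.1.2 (mem_of_mem_erase h)), card_erase_of_mem hfX,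
        hXr, Nat.sub_add_cancel (card_pos.2 ⟨f, hfX⟩ |>.trans_eq hXr)]
    exact ⟨hM.1.circuit_of_notMem (insert_subset hg.1.1 ((erase_subset f X).trans hXE)) hcard
      hg.2, hcard⟩
  refine card_le_one.2 fun g hg g' hg' => by_contra fun hne => ?_
  have hgX : g ∉ X.erase f := fun h => (mem_sdiff.1 (mem_filter.1 hg).1).2 (mem_of_mem_erase h)
  have hsparse := hM.2 _ _ (hcircuit g hg).1 (hcircuit g' hg').1 (hcircuit g hg).2
    (hcircuit g' hg').2 (fun h => hne ((insert_inj hgX).1 h))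
  have := (card_le_card (symmDiff_insert_insert_subset (X.erase f) g g')).trans card_le_two
  omega

lemma card_filter_erase_subset_le {S : Finset (Finset α)} {Y : Finset α} {e f : α}
    (heY : e ∈ Y) (hfY : f ∉ Y) (hS : ∀ X ∈ S, e ∈ X ∧ f ∈ X ∧ X.card = Y.card) :
    (S.filter (fun X => X.erase f ⊆ Y)).card ≤ Y.card - 1 := by
  calc (S.filter (fun X => X.erase f ⊆ Y)).card ≤ ((Y.erase e).powersetCard 1).card := by
        refine card_le_card_of_injOn (fun X => Y \ X) (fun X hX => ?_) (fun X₁ hX₁ X₂ hX₂ h => ?_)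
        · obtain ⟨hXS, hXY⟩ := mem_filter.1 hX
          obtain ⟨heX, hfX, hXcard⟩ := hS X hXS
          have hYX : Y \ X = Y \ X.erase f := by
            ext x
            grind
          show Y \ X ∈ _
          refine mem_powersetCard.2 ⟨fun x hx => ?_, ?_⟩
          · exact mem_erase.2 ⟨fun hxe => (mem_sdiff.1 hx).2 (hxe ▸ heX), (mem_sdiff.1 hx).1⟩
          · rw [hYX, card_sdiff_of_subset hXY, card_erase_of_mem hfX, hXcard]
            have := card_pos.2 ⟨e, heY⟩
            omega
        · obtain ⟨hX₁S, hX₁Y⟩ := mem_filter.1 hX₁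
          obtain ⟨hX₂S, hX₂Y⟩ := mem_filter.1 hX₂
          have hrecover : ∀ X ∈ S, X.erase f ⊆ Y → X = insert f (Y \ (Y \ X)) := by
            intro X hXS hXY
            have := (hS X hXS).2.1
            ext x
            grind
          rw [hrecover X₁ hX₁S hX₁Y, hrecover X₂ hX₂S hX₂Y]
          exact congrArg _ (congrArg _ h)
    _ = Y.card - 1 := by rw [card_powersetCard, card_erase_of_mem heY, Nat.choose_one_right]

lemma IsSparsePaving.le_card_filter_exchange {E : Finset α} {r : ℕ} {B : Finset (Finset α)}
    (hM : IsSparsePaving E r B) {X : Finset α} (hX : X ∈ B) {e f : α} (heX : e ∈ X)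
    (hfX : f ∈ X) (hef : e ≠ f) :
    E.card - r - 1 ≤
      ((B.filter (fun Y => e ∈ Y ∧ f ∉ Y)).filter (fun Y => X.erase f ⊆ Y)).card := by
  obtain ⟨hXE, hXr⟩ := hM.1.1.2.1 X hX
  have hgood : E.card - r - 1 ≤ ((E \ X).filter (fun g => insert g (X.erase f) ∈ B)).card := by
    have hsplit := card_filter_add_card_filter_not (s := E \ X)
      (fun g => insert g (X.erase f) ∈ B)
    have hbad := hM.card_filter_exchange_notMem_le_one hX hfX
    rw [card_sdiff_of_subset hXE, hXr] at hsplit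
    omega
  have hgX : ∀ g ∈ (E \ X).filter (fun g => insert g (X.erase f) ∈ B), g ∉ X.erase f :=
    fun g hg hgX => (mem_sdiff.1 (mem_filter.1 hg).1).2 (mem_of_mem_erase hgX)
  refine hgood.trans (card_le_card_of_injOn (fun g => insert g (X.erase f)) (fun g hg => ?_)
    (fun g hg g' _ h => (insert_inj (hgX g hg)).1 h))
  have hfg : f ≠ g := fun hfg => (mem_sdiff.1 (mem_filter.1 hg).1).2 (hfg ▸ hfX)
  refine mem_filter.2 ⟨mem_filter.2 ⟨(mem_filter.1 hg).2, ?_, ?_⟩, subset_insert _ _⟩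
  · exact mem_insert_of_mem (mem_erase.2 ⟨hef, heX⟩)
  · simp [hfg]

theorem stmt4_general (E : Finset α) (r m : ℕ) (B : Finset (Finset α))
    (hM : IsSparsePaving E r B) (hm : E.card = m)
    (e f : α) (hef : e ≠ f) :
    (m - r - 1) * (B.filter (fun X => e ∈ X ∧ f ∈ X)).card ≤
      (r - 1) * (B.filter (fun X => e ∈ X ∧ f ∉ X)).card := by
  subst hm
  rw [mul_comm, mul_comm (r - 1)]
  refine card_mul_le_card_mul (fun X Y => X.erase f ⊆ Y) (fun X hX => ?_) (fun Y hY => ?_)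
  · obtain ⟨hXB, heX, hfX⟩ := mem_filter.1 hX
    exact hM.le_card_filter_exchange hXB heX hfX hef
  · obtain ⟨hYB, heY, hfY⟩ := mem_filter.1 hY
    have hYr := (hM.1.1.2.1 Y hYB).2
    refine hYr ▸ card_filter_erase_subset_le heY hfY fun X hX => ?_
    obtain ⟨hXB, heX, hfX⟩ := mem_filter.1 hX
    exact ⟨heX, hfX, by rw [(hM.1.1.2.1 X hXB).2, hYr]⟩

/-- In a sparse paving matroid of rank `r` on a ground set of size `m`, for distinct
`e, f ∈ E`: `(m - r - 1)·|B_{ef}| ≤ (r - 1)·|B_{e¬f}|`. -/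
theorem stmt4 (E : Finset α) (r m : ℕ) (B : Finset (Finset α))
    (hM : IsSparsePaving E r B) (hm : E.card = m)
    (e f : α) (he : e ∈ E) (hf : f ∈ E) (hef : e ≠ f) :
    (m - r - 1) * (B.filter (fun X => e ∈ X ∧ f ∈ X)).card ≤
      (r - 1) * (B.filter (fun X => e ∈ X ∧ f ∉ X)).card :=
  stmt4_general E r m B hM hm e f hef
end

section
/- Let M be a paving matroid of rank r on a ground set E of size m, let e, f ∈ E be distinct, and let B_{¬e¬f} and B_{¬ef} denote the sets of bases containing neither e nor f, and containing f but not e, respectively. Then (r − 1)·|B_{¬e¬f}| ≤ (m − r − 1)·|B_{¬ef}|. -/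
open scoped symmDiff

variable {α : Type*} [DecidableEq α]

/-! The proof double counts the edges of the basis exchange graph between bases avoiding `e`
and `f` and bases avoiding `e` but containing `f`. A basis `X` avoiding `f` has at least `r - 1`
neighbours `X - g + f`: if two of them, for `g₁ ≠ g₂`, were not bases, then the `(r - 1)`-set
`X - g₁ - g₂ + f`, independent by pavingness, would extend to a basis only by `g₁` or `g₂`.
A basis `Y` containing `f` and avoiding `e` has at most `|E \ (Y + e)| = m - r - 1` neighbours
`Y - f + g`. -/

open Finset

def exchanges (f : α) (X : Finset α) : Finset (Finset α) :=
  X.image fun g => insert f (X.erase g)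

theorem insert_erase_injOn {f : α} {X : Finset α} (hfX : f ∉ X) :
    Set.InjOn (fun g => insert f (X.erase g)) X := by
  intro g₁ hg₁ g₂ hg₂ h
  have hf : ∀ g, f ∉ X.erase g := fun g hf => hfX (mem_of_mem_erase hf)
  have h' := congrArg (·.erase f) h
  simp only [erase_insert (hf _)] at h'
  exact erase_injOn X hg₁ hg₂ h'

section

variable {E : Finset α} {r : ℕ} {B : Finset (Finset α)}

theorem MatroidBases.exists_insert_mem_of_indep (hB : MatroidBases E r B) {T X : Finset α}
    (hT : Indep B T) (hTr : T.card + 1 = r) (hX : X ∈ B) : ∃ x ∈ X \ T, insert x T ∈ B := by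
  obtain ⟨-, hcard, hexch⟩ := hB
  obtain ⟨Z, hZ, hTZ⟩ := hT
  have hZr := (hcard Z hZ).2
  obtain ⟨z, hzZ, hzT⟩ : ∃ z ∈ Z, z ∉ T := by
    by_contra! h
    have := card_le_card (show Z ⊆ T from h)
    omega
  have hZT : Z.erase z = T := by
    refine (eq_of_subset_of_card_le (fun a ha => mem_erase.2 ⟨ne_of_mem_of_not_mem ha hzT, hTZ ha⟩)
      ?_).symm
    rw [card_erase_of_mem hzZ]
    omega
  obtain ⟨x, hxX, hxB⟩ := hexch Z hZ X hX z hzZ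
  rw [hZT] at hxB
  refine ⟨x, mem_sdiff.2 ⟨hxX, fun hxT => ?_⟩, hxB⟩
  have := (hcard _ hxB).2
  rw [insert_eq_of_mem hxT] at this
  omega

theorem IsPaving.insert_erase_mem_or_insert_erase_mem (hM : IsPaving E r B) {X : Finset α}
    (hX : X ∈ B) {f : α} (hf : f ∈ E) (hfX : f ∉ X) {g₁ g₂ : α} (hg₁ : g₁ ∈ X) (hg₂ : g₂ ∈ X)
    (hne : g₁ ≠ g₂) : insert f (X.erase g₁) ∈ B ∨ insert f (X.erase g₂) ∈ B := by
  obtain ⟨hB, hpav⟩ := hM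
  obtain ⟨hXE, hXr⟩ := hB.2.1 X hX
  have hg₂' : g₂ ∈ X.erase g₁ := mem_erase.2 ⟨hne.symm, hg₂⟩
  have hg₁' : g₁ ∈ X.erase g₂ := mem_erase.2 ⟨hne, hg₁⟩
  have hr : 2 ≤ r := by
    have := card_le_card (insert_subset hg₁ (singleton_subset_iff.2 hg₂))
    rwa [card_pair hne, hXr] at this
  set T := insert f ((X.erase g₁).erase g₂)
  have hTr : T.card + 1 = r := by
    rw [card_insert_of_notMem fun h => hfX (mem_of_mem_erase (mem_of_mem_erase h)),
      card_erase_of_mem hg₂', card_erase_of_mem hg₁, hXr]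
    omega
  have hTE : T ⊆ E := insert_subset hf ((erase_subset _ _).trans ((erase_subset _ _).trans hXE))
  obtain ⟨x, hx, hxB⟩ := hB.exists_insert_mem_of_indep (hpav T hTE (by omega)) hTr hX
  obtain ⟨hxX, hxT⟩ := mem_sdiff.1 hx
  obtain rfl | rfl : x = g₁ ∨ x = g₂ := by
    by_contra! h
    exact hxT (mem_insert_of_mem (mem_erase.2 ⟨h.2, mem_erase.2 ⟨h.1, hxX⟩⟩))
  · right
    rwa [insert_comm, erase_right_comm, insert_erase hg₁'] at hxB
  · left
    rwa [insert_comm, insert_erase hg₂'] at hxB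

theorem IsPaving.sub_one_le_card_filter_exchanges {e f : α} (hM : IsPaving E r B) {X : Finset α}
    (hX : X ∈ B) (hf : f ∈ E) (hef : e ≠ f) (heX : e ∉ X) (hfX : f ∉ X) :
    r - 1 ≤ ((B.filter fun Y => e ∉ Y ∧ f ∈ Y).filter (· ∈ exchanges f X)).card := by
  have hbad : (X.filter fun g => insert f (X.erase g) ∉ B).card ≤ 1 := by
    refine card_le_one.2 fun g₁ hg₁ g₂ hg₂ => by_contra fun hne => ?_
    rw [mem_filter] at hg₁ hg₂
    rcases hM.insert_erase_mem_or_insert_erase_mem hX hf hfX hg₁.1 hg₂.1 hne with h | h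
    exacts [hg₁.2 h, hg₂.2 h]
  have hsplit := card_filter_add_card_filter_not (s := X) fun g => insert f (X.erase g) ∈ B
  have hXr := (hM.1.2.1 X hX).2
  calc r - 1 ≤ (X.filter fun g => insert f (X.erase g) ∈ B).card := by omega
    _ = ((X.filter fun g => insert f (X.erase g) ∈ B).image fun g => insert f (X.erase g)).card :=
        (card_image_of_injOn ((insert_erase_injOn hfX).mono (filter_subset _ _))).symm
    _ ≤ _ := card_le_card fun Y hY => by
        obtain ⟨g, hg, rfl⟩ := mem_image.1 hY
        obtain ⟨hgX, hgB⟩ := mem_filter.1 hg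
        simp only [exchanges, mem_filter, mem_insert, mem_erase, mem_image]
        exact ⟨⟨hgB, by tauto, Or.inl trivial⟩, g, hgX, rfl⟩

theorem MatroidBases.card_filter_mem_exchanges_le {e f : α} (hB : MatroidBases E r B)
    (he : e ∈ E) {Y : Finset α} (hY : Y ∈ B) (heY : e ∉ Y) :
    ((B.filter fun X => e ∉ X ∧ f ∉ X).filter (Y ∈ exchanges f ·)).card ≤ E.card - r - 1 := by
  obtain ⟨hYE, hYr⟩ := hB.2.1 Y hY
  calc _ ≤ ((E \ insert e Y).image fun g => insert g (Y.erase f)).card := card_le_card ?_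
    _ ≤ (E \ insert e Y).card := card_image_le
    _ = E.card - r - 1 := by
        rw [card_sdiff_of_subset (insert_subset he hYE), card_insert_of_notMem heY, hYr]
        omega
  intro X hX
  obtain ⟨⟨hXB, heX, hfX⟩, hYX⟩ := by simpa only [mem_filter] using hX
  obtain ⟨g, hgX, rfl⟩ := mem_image.1 hYX
  have hfX' : f ∉ X.erase g := fun h => hfX (mem_of_mem_erase h)
  refine mem_image.2 ⟨g, mem_sdiff.2 ⟨(hB.2.1 X hXB).1 hgX, ?_⟩, ?_⟩
  · simp only [mem_insert, mem_erase, ne_eq, not_true_eq_false, false_and, or_false, not_or]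
    exact ⟨ne_of_mem_of_not_mem hgX heX, ne_of_mem_of_not_mem hgX hfX⟩
  · rw [erase_insert hfX', insert_erase hgX]

end

/-- In a paving matroid of rank `r` on a ground set of size `m`, for distinct
`e, f ∈ E`: `(r - 1)·|B_{¬e¬f}| ≤ (m - r - 1)·|B_{¬ef}|`. -/
theorem stmt5 (E : Finset α) (r m : ℕ) (B : Finset (Finset α))
    (hM : IsPaving E r B) (hm : E.card = m)
    (e f : α) (he : e ∈ E) (hf : f ∈ E) (hef : e ≠ f) :
    (r - 1) * (B.filter (fun X => e ∉ X ∧ f ∉ X)).card ≤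
      (m - r - 1) * (B.filter (fun X => e ∉ X ∧ f ∈ X)).card := by
  subst hm
  have h := card_mul_le_card_mul (fun X Y => Y ∈ exchanges f X)
    (s := B.filter fun X => e ∉ X ∧ f ∉ X) (t := B.filter fun X => e ∉ X ∧ f ∈ X)
    (fun X hX => hM.sub_one_le_card_filter_exchanges (mem_filter.1 hX).1 hf hef
      (mem_filter.1 hX).2.1 (mem_filter.1 hX).2.2)
    (fun Y hY => hM.1.card_filter_mem_exchanges_le he (mem_filter.1 hY).1 (mem_filter.1 hY).2.1)
  rwa [mul_comm (r - 1), mul_comm (E.card - r - 1)]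
end

section
/- Let M be a sparse paving matroid on a ground set E of size m with rank r, and let e, f ∈ E be distinct elements. If X is a basis chosen uniformly at random from the bases B of M, then Pr(e ∈ X and f ∈ X) ≤ Pr(e ∈ X) · Pr(f ∈ X); i.e., the events e ∈ X and f ∈ X are negatively correlated. -/
open scoped symmDiff

variable {α : Type*} [DecidableEq α]

/-!
Write `P, R, S, Q` for the numbers of bases containing both `e` and `f`, only `e`, only `f`,
and neither; the inequality is equivalent to `P * Q ≤ R * S`. Two non-bases of size `r` are
circuit-hyperplanes, so in a sparse paving matroid they differ in more than two elements: among
`r`-sets that pairwise differ by a single exchange, at most one is not a basis. Double counting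
the exchanges `X ↦ insert g (X.erase f)` between bases containing `f` and bases avoiding it then
gives `P * (|E| - r - 1) ≤ R * (r - 1)` and `Q * (r - 1) ≤ S * (|E| - r - 1)`, and multiplying
these yields `P * Q ≤ R * S`.
-/

open Finset

lemma Finset.card_symmDiff_le_two {s t : Finset α} {a b : α}
    (h : ∀ x, x ≠ a → x ≠ b → (x ∈ s ↔ x ∈ t)) : (s ∆ t).card ≤ 2 := by
  refine (card_le_card (t := {a, b}) fun x hx => ?_).trans card_le_two
  rw [mem_symmDiff] at hx
  by_contra hab
  simp only [mem_insert, mem_singleton, not_or] at hab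
  have := h x hab.1 hab.2
  tauto

lemma Finset.exists_eq_insert_erase_of_erase_subset {X Y : Finset α} {f : α}
    (hXY : X.card = Y.card) (hfX : f ∈ X) (hfY : f ∉ Y) (hsub : X.erase f ⊆ Y) :
    ∃ g ∈ Y, g ∉ X ∧ X = insert f (Y.erase g) ∧ Y = insert g (X.erase f) := by
  obtain ⟨g, hgY, hgX⟩ : ∃ g ∈ Y, g ∉ X.erase f :=
    not_subset.1 fun h => by
      have := card_le_card h
      rw [card_erase_of_mem hfX] at this
      have := card_pos.2 ⟨f, hfX⟩
      omega
  have hgf : g ≠ f := fun h => hfY (h ▸ hgY)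
  have hY : Y = insert g (X.erase f) := (eq_of_subset_of_card_le (insert_subset hgY hsub)
    (by rw [card_insert_of_notMem hgX, card_erase_of_mem hfX]; omega)).symm
  refine ⟨g, hgY, fun h => hgX (mem_erase.2 ⟨hgf, h⟩), ?_, hY⟩
  rw [hY, erase_insert hgX, insert_erase hfX]

lemma Finset.injOn_insert_erase {s : Finset α} {f : α} (hf : f ∉ s) :
    Set.InjOn (fun g => insert f (s.erase g)) s := fun g hg g' hg' h => by
  have hnot : ∀ g, f ∉ s.erase g := fun g h => hf (mem_of_mem_erase h)
  refine erase_injOn s hg hg' ?_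
  rw [← erase_insert (hnot g), ← erase_insert (hnot g')]
  exact congrArg (·.erase f) h

lemma Finset.card_filter_eq_add {β : Type*} (s : Finset β) (p q : β → Prop) [DecidablePred p]
    [DecidablePred q] :
    (s.filter p).card =
      (s.filter fun x => p x ∧ q x).card + (s.filter fun x => p x ∧ ¬q x).card := by
  rw [← filter_filter, ← filter_filter, card_filter_add_card_filter_not]

lemma Nat.mul_le_mul_of_mul_le_of_mul_le {a b c d k l : ℕ} (hac : a * k ≤ c * l)
    (hbd : b * l ≤ d * k) (hl : 0 < l) : a * b ≤ c * d := by
  rcases k.eq_zero_or_pos with rfl | hk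
  · obtain rfl : b = 0 := by simpa [hl.ne'] using hbd
    simp
  refine le_of_mul_le_mul_right ?_ (mul_pos hk hl)
  calc a * b * (k * l) = (a * k) * (b * l) := by ring
    _ ≤ (c * l) * (d * k) := Nat.mul_le_mul hac hbd
    _ = c * d * (k * l) := by ring

lemma div_le_div_mul_div_of_mul_le {K : Type*} [Field K] [LinearOrder K]
    [IsStrictOrderedRing K] {a b c d : K} (ha : 0 ≤ a) (hb : 0 ≤ b) (hc : 0 ≤ c)
    (hd : 0 ≤ d) (h : a * d ≤ b * c) :
    a / (a + b + c + d) ≤ (a + b) / (a + b + c + d) * ((a + c) / (a + b + c + d)) := by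
  set n := a + b + c + d
  obtain hn | hn := (show 0 ≤ n by positivity).eq_or_lt
  · simp [← hn]
  rw [div_mul_div_comm, div_le_div_iff₀ hn (mul_pos hn hn)]
  have han : a * n ≤ (a + b) * (a + c) := by linarith
  calc a * (n * n) = a * n * n := by ring
    _ ≤ (a + b) * (a + c) * n := mul_le_mul_of_nonneg_right han hn.le

section

variable {E : Finset α} {r : ℕ} {B : Finset (Finset α)}

lemma IsPaving.circuit_of_notMem_s6 (hP : IsPaving E r B) {C : Finset α} (hCE : C ⊆ E)
    (hCr : C.card = r) (hCB : C ∉ B) : Circuit E B C := by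
  refine ⟨hCE, fun ⟨Y, hY, hCY⟩ => ?_, fun x hx => ?_⟩
  · have hYr := (hP.1.2.1 Y hY).2
    exact hCB (eq_of_subset_of_card_le hCY (by omega) ▸ hY)
  · exact hP.2 _ ((erase_subset _ _).trans hCE) (by rw [card_erase_of_mem hx, hCr])

lemma IsSparsePaving.subset_and_card_eq (hM : IsSparsePaving E r B) {X : Finset α}
    (hX : X ∈ B) : X ⊆ E ∧ X.card = r :=
  hM.1.1.2.1 X hX

lemma IsSparsePaving.eq_of_card_symmDiff_le_two (hM : IsSparsePaving E r B) {C C' : Finset α}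
    (hC : C ⊆ E ∧ C.card = r) (hC' : C' ⊆ E ∧ C'.card = r) (hCB : C ∉ B) (hC'B : C' ∉ B)
    (h2 : (C ∆ C').card ≤ 2) : C = C' := by
  by_contra hne
  have := hM.2 C C' (hM.1.circuit_of_notMem_s6 hC.1 hC.2 hCB)
    (hM.1.circuit_of_notMem_s6 hC'.1 hC'.2 hC'B) hC.2 hC'.2 hne
  omega

lemma IsSparsePaving.card_sub_one_le_card_filter_mem {ι : Type*} (hM : IsSparsePaving E r B)
    {I : Finset ι} {F : ι → Finset α} (hF : Set.InjOn F I)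
    (hFE : ∀ i ∈ I, F i ⊆ E ∧ (F i).card = r)
    (hF2 : ∀ i ∈ I, ∀ j ∈ I, (F i ∆ F j).card ≤ 2) :
    I.card - 1 ≤ (I.filter fun i => F i ∈ B).card := by
  have hnon : (I.filter fun i => F i ∉ B).card ≤ 1 := by
    refine card_le_one.2 fun i hi j hj => ?_
    rw [mem_filter] at hi hj
    exact hF hi.1 hj.1 <|
      hM.eq_of_card_symmDiff_le_two (hFE i hi.1) (hFE j hj.1) hi.2 hj.2 (hF2 i hi.1 j hj.1)
  have := card_filter_add_card_filter_not (s := I) (fun i => F i ∈ B)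
  omega

lemma IsSparsePaving.card_sub_le_card_filter_erase_subset (hM : IsSparsePaving E r B)
    {X : Finset α} (hX : X ∈ B) {f : α} (hfX : f ∈ X) :
    E.card - r - 1 ≤ (B.filter fun Y => X.erase f ⊆ Y ∧ f ∉ Y).card := by
  obtain ⟨hXE, hXr⟩ := hM.subset_and_card_eq hX
  have hnot : ∀ g ∈ E \ X, g ∉ X.erase f :=
    fun g hg h => (mem_sdiff.1 hg).2 (mem_of_mem_erase h)
  have hF : Set.InjOn (fun g => insert g (X.erase f)) ↑(E \ X) :=
    fun g hg g' _ h => (insert_inj (hnot g hg)).1 h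
  calc E.card - r - 1 = (E \ X).card - 1 := by rw [card_sdiff_of_subset hXE, hXr]
    _ ≤ ((E \ X).filter fun g => insert g (X.erase f) ∈ B).card := by
      refine hM.card_sub_one_le_card_filter_mem hF (fun g hg => ⟨?_, ?_⟩) fun g _ g' _ => ?_
      · exact insert_subset (mem_sdiff.1 hg).1 ((erase_subset _ _).trans hXE)
      · rw [card_insert_of_notMem (hnot g hg), card_erase_of_mem hfX]
        have := card_pos.2 ⟨f, hfX⟩
        omega
      · exact card_symmDiff_le_two (a := g) (b := g') fun x hxg hxg' => by simp [hxg, hxg']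
    _ ≤ (B.filter fun Y => X.erase f ⊆ Y ∧ f ∉ Y).card := by
      refine card_le_card_of_injOn _ (fun g hg => ?_) (hF.mono (filter_subset _ _))
      obtain ⟨hg, hgB⟩ := mem_filter.1 hg
      have hgf : g ≠ f := fun h => (mem_sdiff.1 hg).2 (h ▸ hfX)
      simp [hgB, hgf.symm, subset_insert]

lemma IsSparsePaving.card_sub_le_card_filter_subset_insert (hM : IsSparsePaving E r B)
    {Y : Finset α} (hYE : Y ⊆ E) (hYr : Y.card = r) {f : α} (hfE : f ∈ E) (hfY : f ∉ Y) :
    r - 1 ≤ (B.filter fun X => f ∈ X ∧ X.erase f ⊆ Y).card := by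
  have hnot : ∀ g, f ∉ Y.erase g := fun g h => hfY (mem_of_mem_erase h)
  have hF := injOn_insert_erase hfY
  calc r - 1 = Y.card - 1 := by rw [hYr]
    _ ≤ (Y.filter fun g => insert f (Y.erase g) ∈ B).card := by
      refine hM.card_sub_one_le_card_filter_mem hF (fun g hg => ⟨?_, ?_⟩) fun g _ g' _ => ?_
      · exact insert_subset hfE ((erase_subset _ _).trans hYE)
      · rw [card_insert_of_notMem (hnot g), card_erase_of_mem hg, hYr]
        have := card_pos.2 ⟨g, hg⟩
        omega
      · exact card_symmDiff_le_two (a := g) (b := g') fun x hxg hxg' => by simp [hxg, hxg']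
    _ ≤ (B.filter fun X => f ∈ X ∧ X.erase f ⊆ Y).card := by
      refine card_le_card_of_injOn _ (fun g hg => ?_) (hF.mono (filter_subset _ _))
      obtain ⟨-, hgB⟩ := mem_filter.1 hg
      simp only [mem_coe, mem_filter, erase_insert (hnot g)]
      exact ⟨hgB, mem_insert_self _ _, erase_subset _ _⟩

lemma IsSparsePaving.card_filter_mem_mem_mul_le (hM : IsSparsePaving E r B) {e f : α}
    (hef : e ≠ f) :
    (B.filter fun X => e ∈ X ∧ f ∈ X).card * (E.card - r - 1) ≤
      (B.filter fun X => e ∈ X ∧ f ∉ X).card * (r - 1) := by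
  refine card_mul_le_card_mul (fun X Y => X.erase f ⊆ Y) (fun X hX => ?_) (fun Y hY => ?_)
  · obtain ⟨hXB, heX, hfX⟩ := mem_filter.1 hX
    refine (hM.card_sub_le_card_filter_erase_subset hXB hfX).trans (card_le_card fun Y hY => ?_)
    obtain ⟨hYB, hXY, hfY⟩ := mem_filter.1 hY
    simp only [bipartiteAbove, mem_filter]
    exact ⟨⟨hYB, hXY (mem_erase.2 ⟨hef, heX⟩), hfY⟩, hXY⟩
  · obtain ⟨hYB, heY, hfY⟩ := mem_filter.1 hY
    calc (bipartiteBelow _ _ Y).card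
        ≤ ((Y.erase e).image fun g => insert f (Y.erase g)).card := by
          refine card_le_card fun X hX => ?_
          simp only [bipartiteBelow, mem_filter] at hX
          obtain ⟨⟨hXB, heX, hfX⟩, hXY⟩ := hX
          obtain ⟨g, hgY, hgX, hX, -⟩ := exists_eq_insert_erase_of_erase_subset
            (by rw [(hM.subset_and_card_eq hXB).2, (hM.subset_and_card_eq hYB).2]) hfX hfY hXY
          exact mem_image.2 ⟨g, mem_erase.2 ⟨fun h => hgX (h ▸ heX), hgY⟩, hX.symm⟩
      _ ≤ (Y.erase e).card := card_image_le
      _ = r - 1 := by rw [card_erase_of_mem heY, (hM.subset_and_card_eq hYB).2]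

lemma IsSparsePaving.card_filter_notMem_notMem_mul_le (hM : IsSparsePaving E r B) {e f : α}
    (he : e ∈ E) (hf : f ∈ E) (hef : e ≠ f) :
    (B.filter fun X => e ∉ X ∧ f ∉ X).card * (r - 1) ≤
      (B.filter fun X => e ∉ X ∧ f ∈ X).card * (E.card - r - 1) := by
  refine card_mul_le_card_mul (fun Y X => X.erase f ⊆ Y) (fun Y hY => ?_) (fun X hX => ?_)
  · obtain ⟨hYB, heY, hfY⟩ := mem_filter.1 hY
    obtain ⟨hYE, hYr⟩ := hM.subset_and_card_eq hYB
    refine (hM.card_sub_le_card_filter_subset_insert hYE hYr hf hfY).trans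
      (card_le_card fun X hX => ?_)
    obtain ⟨hXB, hfX, hXY⟩ := mem_filter.1 hX
    simp only [bipartiteAbove, mem_filter]
    exact ⟨⟨hXB, fun heX => heY (hXY (mem_erase.2 ⟨hef, heX⟩)), hfX⟩, hXY⟩
  · obtain ⟨hXB, heX, hfX⟩ := mem_filter.1 hX
    obtain ⟨hXE, hXr⟩ := hM.subset_and_card_eq hXB
    calc (bipartiteBelow _ _ X).card
        ≤ ((E \ insert e X).image fun g => insert g (X.erase f)).card := by
          refine card_le_card fun Y hY => ?_
          simp only [bipartiteBelow, mem_filter] at hY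
          obtain ⟨⟨hYB, heY, hfY⟩, hXY⟩ := hY
          obtain ⟨g, hgY, hgX, -, hY⟩ := exists_eq_insert_erase_of_erase_subset
            (by rw [hXr, (hM.subset_and_card_eq hYB).2]) hfX hfY hXY
          refine mem_image.2
            ⟨g, mem_sdiff.2 ⟨(hM.subset_and_card_eq hYB).1 hgY, ?_⟩, hY.symm⟩
          rw [mem_insert]
          rintro (rfl | hgX')
          exacts [heY hgY, hgX hgX']
      _ ≤ (E \ insert e X).card := card_image_le
      _ = E.card - r - 1 := by
          rw [card_sdiff_of_subset (insert_subset he hXE), card_insert_of_notMem heX, hXr]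
          omega

lemma IsSparsePaving.card_filter_mem_mem_mul_card_filter_notMem_notMem_le
    (hM : IsSparsePaving E r B) {e f : α} (he : e ∈ E) (hf : f ∈ E) (hef : e ≠ f) :
    (B.filter fun X => e ∈ X ∧ f ∈ X).card * (B.filter fun X => e ∉ X ∧ f ∉ X).card ≤
      (B.filter fun X => e ∈ X ∧ f ∉ X).card *
        (B.filter fun X => e ∉ X ∧ f ∈ X).card := by
  obtain hP | ⟨X, hX⟩ := (B.filter fun X => e ∈ X ∧ f ∈ X).eq_empty_or_nonempty
  · simp [hP]
  obtain ⟨hXB, heX, hfX⟩ := mem_filter.1 hX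
  have hr : 2 ≤ r := by
    rw [← (hM.subset_and_card_eq hXB).2, ← card_pair hef]
    exact card_le_card (insert_subset heX (singleton_subset_iff.2 hfX))
  exact Nat.mul_le_mul_of_mul_le_of_mul_le (hM.card_filter_mem_mem_mul_le hef)
    (hM.card_filter_notMem_notMem_mul_le he hf hef) (by omega)

end

theorem stmt6_general (E : Finset α) (r : ℕ) (B : Finset (Finset α))
    (hM : IsSparsePaving E r B)
    (e f : α) (he : e ∈ E) (hf : f ∈ E) (hef : e ≠ f) :
    ((B.filter (fun X => e ∈ X ∧ f ∈ X)).card : ℚ) / B.card ≤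
      ((B.filter (fun X => e ∈ X)).card / B.card) *
        ((B.filter (fun X => f ∈ X)).card / B.card) := by
  have hB : B.card = (B.filter fun X => e ∈ X).card + (B.filter fun X => e ∉ X).card :=
    (card_filter_add_card_filter_not _).symm
  have hBf : (B.filter fun X => f ∈ X).card = (B.filter fun X => e ∈ X ∧ f ∈ X).card +
      (B.filter fun X => e ∉ X ∧ f ∈ X).card := by
    simp only [card_filter_eq_add B (fun X => f ∈ X) (fun X => e ∈ X), and_comm]
  rw [hB, hBf, card_filter_eq_add B (fun X => e ∈ X) (fun X => f ∈ X),
    card_filter_eq_add B (fun X => e ∉ X) (fun X => f ∈ X), ← add_assoc]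
  push_cast
  exact div_le_div_mul_div_of_mul_le (by positivity) (by positivity) (by positivity)
    (by positivity) (by exact_mod_cast
      hM.card_filter_mem_mem_mul_card_filter_notMem_notMem_le he hf hef)

/-- Sparse paving matroids satisfy the negative correlation property: for a uniformly
random basis `X` and distinct `e, f ∈ E`, `Pr(e ∈ X ∧ f ∈ X) ≤ Pr(e ∈ X)·Pr(f ∈ X)`. -/
theorem stmt6 (E : Finset α) (r m : ℕ) (B : Finset (Finset α))
    (hM : IsSparsePaving E r B) (hm : E.card = m)
    (e f : α) (he : e ∈ E) (hf : f ∈ E) (hef : e ≠ f) :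
    ((B.filter (fun X => e ∈ X ∧ f ∈ X)).card : ℚ) / B.card ≤
      ((B.filter (fun X => e ∈ X)).card / B.card) *
        ((B.filter (fun X => f ∈ X)).card / B.card) :=
  stmt6_general E r B hM e f he hf hef
end

section
/- Let H = ([r], E) be an undirected graph on r vertices, and let C_r be the collection of edge sets of Hamiltonian cycles of H. Then any two distinct elements of C_r have symmetric difference of size at least 4; consequently C_r is the set of size-r circuits of a sparse paving matroid of rank r on E (provided some r-subset of E is not a Hamiltonian cycle). -/
open scoped symmDiff

variable {α : Type*} [DecidableEq α]

/-!
Every vertex has degree 2 in the edge set of a Hamiltonian cycle. Two such edge sets of equal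
size differ in an even number of edges; if they differed in only two, say `Z ∪ {e}` and
`Z ∪ {e'}`, comparing degrees would force `e` and `e'` to have the same endpoints.

Any family of `r`-sets pairwise differing in more than two elements is the set of `r`-circuits of
a sparse paving matroid whose bases are the remaining `r`-sets: two `r`-sets through a common
`(r-1)`-set differ in only two elements, so at most one of them is a circuit. This yields both
basis exchange and the independence of every `(r-1)`-set.
-/

open Finset SimpleGraph

theorem Finset.card_symmDiff_of_card_eq {s t : Finset α} (h : #s = #t) :
    #(s ∆ t) = 2 * #(s \ t) := by
  rw [symmDiff_def, sup_eq_union, card_union_of_disjoint disjoint_sdiff_sdiff,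
    ← card_sdiff_comm h, two_mul]

theorem Finset.card_symmDiff_insert_insert_le (s : Finset α) (a b : α) :
    #(insert a s ∆ insert b s) ≤ 2 :=
  calc #(insert a s ∆ insert b s)
      ≤ #({a, b} : Finset α) := card_le_card fun x hx => by
        simp only [mem_symmDiff, mem_insert, mem_singleton] at hx ⊢
        tauto
    _ ≤ 2 := card_le_two

namespace SimpleGraph

variable {V : Type*} [DecidableEq V]

theorem Walk.IsCycle.card_filter_mem_edges {G : SimpleGraph V} {u w : V} {p : G.Walk u u}
    (hp : p.IsCycle) (hw : w ∈ p.support) : #{e ∈ p.edges.toFinset | w ∈ e} = 2 := by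
  have hinc : (↑({e ∈ p.edges.toFinset | w ∈ e}) : Set (Sym2 V)) =
      p.toSubgraph.spanningCoe.incidenceSet w := by
    ext e
    simp [incidenceSet, Subgraph.edgeSet_spanningCoe, Walk.edgeSet_toSubgraph]
  rw [← Set.ncard_coe_finset, hinc, ← Nat.card_coe_set_eq,
    Nat.card_congr (incidenceSetEquivNeighborSet _ w), Nat.card_coe_set_eq]
  exact hp.ncard_neighborSet_toSubgraph_eq_two hw

theorem Walk.IsHamiltonianCycle.card_edges_toFinset [Fintype V] {G : SimpleGraph V} {u : V}
    {p : G.Walk u u} (hp : p.IsHamiltonianCycle) : #p.edges.toFinset = Fintype.card V := by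
  rw [List.card_toFinset, hp.isCycle.isCircuit.isTrail.edges_nodup.dedup, Walk.length_edges,
    hp.length_eq]

theorem mem_of_erase_eq_erase_of_card_filter_mem_eq {C C' : Finset (Sym2 V)} {e e' : Sym2 V}
    {w : V} (he : e ∈ C) (herase : C.erase e = C'.erase e')
    (hdeg : #{f ∈ C | w ∈ f} = #{f ∈ C' | w ∈ f}) (hw : w ∈ e) : w ∈ e' := by
  by_contra hw'
  have hC : #{f ∈ C.erase e | w ∈ f} + 1 = #{f ∈ C | w ∈ f} := by
    rw [filter_erase, card_erase_add_one (mem_filter.mpr ⟨he, hw⟩)]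
  have hC' : #{f ∈ C'.erase e' | w ∈ f} = #{f ∈ C' | w ∈ f} := by
    rw [filter_erase, erase_eq_of_notMem (show e' ∉ {f ∈ C' | w ∈ f} from
      fun h => hw' (mem_filter.mp h).2)]
  rw [herase] at hC
  omega

theorem eq_of_erase_eq_erase_of_card_filter_mem_eq {C C' : Finset (Sym2 V)} {e e' : Sym2 V}
    (he : e ∈ C) (he' : e' ∈ C') (herase : C.erase e = C'.erase e')
    (hdeg : ∀ w, #{f ∈ C | w ∈ f} = #{f ∈ C' | w ∈ f}) : e = e' :=
  Sym2.ext fun w =>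
    ⟨mem_of_erase_eq_erase_of_card_filter_mem_eq he herase (hdeg w),
      mem_of_erase_eq_erase_of_card_filter_mem_eq he' herase.symm (hdeg w).symm⟩

theorem four_le_card_symmDiff_of_card_filter_mem_eq {C C' : Finset (Sym2 V)} (hcard : #C = #C')
    (hdeg : ∀ w, #{f ∈ C | w ∈ f} = #{f ∈ C' | w ∈ f}) (hne : C ≠ C') : 4 ≤ #(C ∆ C') := by
  rw [card_symmDiff_of_card_eq hcard]
  have hpos : #(C \ C') ≠ 0 := fun h =>
    hne (eq_of_subset_of_card_le (sdiff_eq_empty_iff_subset.mp (card_eq_zero.mp h)) hcard.ge)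
  have hone : #(C \ C') ≠ 1 := by
    intro h
    obtain ⟨e, he⟩ := card_eq_one.mp h
    obtain ⟨e', he'⟩ := card_eq_one.mp ((card_sdiff_comm hcard).symm.trans h)
    have heC : e ∈ C \ C' := he ▸ mem_singleton_self e
    have he'C' : e' ∈ C' \ C := he' ▸ mem_singleton_self e'
    have herase : C.erase e = C'.erase e' := by
      rw [← sdiff_singleton_eq_erase, ← sdiff_singleton_eq_erase, ← he, ← he',
        sdiff_sdiff_self_left, sdiff_sdiff_self_left, inter_comm]
    have hee' := eq_of_erase_eq_erase_of_card_filter_mem_eq (mem_sdiff.mp heC).1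
      (mem_sdiff.mp he'C').1 herase hdeg
    exact (mem_sdiff.mp heC).2 (hee' ▸ (mem_sdiff.mp he'C').1)
  omega

theorem Walk.IsHamiltonianCycle.four_le_card_symmDiff_edges [Fintype V] {G : SimpleGraph V}
    {u v : V} {p : G.Walk u u} {q : G.Walk v v} (hp : p.IsHamiltonianCycle)
    (hq : q.IsHamiltonianCycle) (hne : p.edges.toFinset ≠ q.edges.toFinset) :
    4 ≤ #(p.edges.toFinset ∆ q.edges.toFinset) :=
  four_le_card_symmDiff_of_card_filter_mem_eq
    (by rw [hp.card_edges_toFinset, hq.card_edges_toFinset])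
    (fun w => by
      rw [hp.isCycle.card_filter_mem_edges (hp.mem_support w),
        hq.isCycle.card_filter_mem_edges (hq.mem_support w)])
    hne

end SimpleGraph

theorem indep_iff_mem_of_card_eq {β : Type*} {B : Finset (Finset β)} {r : ℕ}
    (hBr : ∀ Y ∈ B, #Y = r) {X : Finset β} (hX : #X = r) :
    Indep B X ↔ X ∈ B :=
  ⟨fun ⟨Y, hY, hXY⟩ => (eq_of_subset_of_card_le hXY (by rw [hX, hBr Y hY])).symm ▸ hY,
    fun h => ⟨X, h, Subset.refl X⟩⟩

section SparsePaving

variable {E : Finset α} {r : ℕ} {Cr B : Finset (Finset α)}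

theorem insert_mem_or_insert_mem_of_two_lt_card_symmDiff
    (hB : ∀ X, X ∈ B ↔ X ⊆ E ∧ #X = r ∧ X ∉ Cr)
    (hfar : ∀ C ∈ Cr, ∀ C' ∈ Cr, C ≠ C' → 2 < #(C ∆ C'))
    {Z : Finset α} {f₁ f₂ : α} (hZE : Z ⊆ E) (hZ : #Z + 1 = r)
    (hf₁ : f₁ ∈ E \ Z) (hf₂ : f₂ ∈ E \ Z) (hne : f₁ ≠ f₂) :
    insert f₁ Z ∈ B ∨ insert f₂ Z ∈ B := by
  rw [mem_sdiff] at hf₁ hf₂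
  have mem_Cr : ∀ {f}, f ∈ E → f ∉ Z → insert f Z ∉ B → insert f Z ∈ Cr := fun hfE hfZ h => by
    by_contra hC
    exact h ((hB _).2 ⟨insert_subset hfE hZE, by rw [card_insert_of_notMem hfZ, hZ], hC⟩)
  by_contra! h
  have hne' : insert f₁ Z ≠ insert f₂ Z := fun heq =>
    (mem_insert.mp (heq ▸ mem_insert_self f₁ Z)).elim hne hf₁.2
  have := hfar _ (mem_Cr hf₁.1 hf₁.2 h.1) _ (mem_Cr hf₂.1 hf₂.2 h.2) hne'
  have := card_symmDiff_insert_insert_le Z f₁ f₂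
  omega

theorem matroidBases_of_two_lt_card_symmDiff
    (hB : ∀ X, X ∈ B ↔ X ⊆ E ∧ #X = r ∧ X ∉ Cr)
    (hfar : ∀ C ∈ Cr, ∀ C' ∈ Cr, C ≠ C' → 2 < #(C ∆ C')) (hBne : B.Nonempty) :
    MatroidBases E r B := by
  have hBE : ∀ X ∈ B, X ⊆ E ∧ #X = r := fun X hX => ((hB X).1 hX).imp_right And.left
  refine ⟨hBne, hBE, fun X hX Y hY e he => ?_⟩
  obtain ⟨hXE, hXr⟩ := hBE X hX
  obtain ⟨hYE, hYr⟩ := hBE Y hY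
  by_cases heY : e ∈ Y
  · exact ⟨e, heY, by rwa [insert_erase he]⟩
  have hZ : #(X.erase e) + 1 = r := by rw [card_erase_add_one he, hXr]
  have hYX : 0 < #(Y \ X) := by
    rw [card_sdiff_comm (hYr.trans hXr.symm)]
    exact card_pos.mpr ⟨e, mem_sdiff.mpr ⟨he, heY⟩⟩
  have mem_E_sdiff : ∀ {f}, f ∈ Y \ X → f ∈ E \ X.erase e := fun hf =>
    mem_sdiff.mpr ⟨hYE (mem_sdiff.mp hf).1, fun h => (mem_sdiff.mp hf).2 (mem_of_mem_erase h)⟩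
  by_cases h : 1 < #(Y \ X)
  · obtain ⟨f₁, hf₁, f₂, hf₂, hne⟩ := one_lt_card.mp h
    rcases insert_mem_or_insert_mem_of_two_lt_card_symmDiff hB hfar
        ((erase_subset e X).trans hXE) hZ (mem_E_sdiff hf₁) (mem_E_sdiff hf₂) hne with h | h
    exacts [⟨f₁, (mem_sdiff.mp hf₁).1, h⟩, ⟨f₂, (mem_sdiff.mp hf₂).1, h⟩]
  obtain ⟨f, hf⟩ := card_eq_one.mp (by omega : #(Y \ X) = 1)
  have hfY : f ∈ Y := (mem_sdiff.mp (hf ▸ mem_singleton_self f)).1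
  have hY_sub : Y ⊆ insert f (X.erase e) := fun y hy => by
    by_cases hyX : y ∈ X
    · exact mem_insert_of_mem (mem_erase.mpr ⟨fun hye => heY (hye ▸ hy), hyX⟩)
    · have hyf : y ∈ Y \ X := mem_sdiff.mpr ⟨hy, hyX⟩
      rw [hf, mem_singleton] at hyf
      exact hyf ▸ mem_insert_self y _
  have hY_eq : Y = insert f (X.erase e) :=
    eq_of_subset_of_card_le hY_sub ((card_insert_le _ _).trans (by omega))
  exact ⟨f, hfY, hY_eq ▸ hY⟩

theorem indep_of_card_eq_sub_one_of_two_lt_card_symmDiff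
    (hB : ∀ X, X ∈ B ↔ X ⊆ E ∧ #X = r ∧ X ∉ Cr)
    (hfar : ∀ C ∈ Cr, ∀ C' ∈ Cr, C ≠ C' → 2 < #(C ∆ C')) (hBne : B.Nonempty)
    {X : Finset α} (hXE : X ⊆ E) (hX : #X = r - 1) : Indep B X := by
  obtain ⟨Y, hY⟩ := hBne
  obtain ⟨hYE, hYr, -⟩ := (hB Y).1 hY
  rcases Nat.eq_zero_or_pos r with rfl | hr
  · exact ⟨Y, hY, by simp [card_eq_zero.mp hX]⟩
  by_cases h : 1 < #(E \ X)
  · obtain ⟨f₁, hf₁, f₂, hf₂, hne⟩ := one_lt_card.mp h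
    rcases insert_mem_or_insert_mem_of_two_lt_card_symmDiff hB hfar hXE (by omega) hf₁ hf₂ hne
      with h | h
    exacts [⟨_, h, subset_insert _ _⟩, ⟨_, h, subset_insert _ _⟩]
  · have hEr : #E ≤ r := by rw [card_sdiff_of_subset hXE] at h; omega
    exact ⟨Y, hY, eq_of_subset_of_card_le hYE (by omega) ▸ hXE⟩

theorem mem_iff_circuit_and_card_eq_of_two_lt_card_symmDiff
    (hB : ∀ X, X ∈ B ↔ X ⊆ E ∧ #X = r ∧ X ∉ Cr)
    (hfar : ∀ C ∈ Cr, ∀ C' ∈ Cr, C ≠ C' → 2 < #(C ∆ C')) (hBne : B.Nonempty)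
    (hCrE : ∀ C ∈ Cr, C ⊆ E ∧ #C = r) (C : Finset α) :
    C ∈ Cr ↔ Circuit E B C ∧ #C = r := by
  have hBr : ∀ Y ∈ B, #Y = r := fun Y hY => ((hB Y).1 hY).2.1
  constructor
  · intro hC
    obtain ⟨hCE, hCr⟩ := hCrE C hC
    refine ⟨⟨hCE, fun hind => ((hB C).1 ((indep_iff_mem_of_card_eq hBr hCr).1 hind)).2.2 hC,
      fun x hx => ?_⟩, hCr⟩
    exact indep_of_card_eq_sub_one_of_two_lt_card_symmDiff hB hfar hBne
      ((erase_subset x C).trans hCE) (by rw [card_erase_of_mem hx, hCr])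
  · rintro ⟨⟨hCE, hdep, -⟩, hCr⟩
    by_contra hC
    exact hdep ((indep_iff_mem_of_card_eq hBr hCr).2 ((hB C).2 ⟨hCE, hCr, hC⟩))

theorem isSparsePaving_of_two_lt_card_symmDiff
    (hB : ∀ X, X ∈ B ↔ X ⊆ E ∧ #X = r ∧ X ∉ Cr)
    (hfar : ∀ C ∈ Cr, ∀ C' ∈ Cr, C ≠ C' → 2 < #(C ∆ C')) (hBne : B.Nonempty)
    (hCrE : ∀ C ∈ Cr, C ⊆ E ∧ #C = r) : IsSparsePaving E r B :=
  have mem_Cr := mem_iff_circuit_and_card_eq_of_two_lt_card_symmDiff hB hfar hBne hCrE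
  ⟨⟨matroidBases_of_two_lt_card_symmDiff hB hfar hBne,
      fun _ hXE hX => indep_of_card_eq_sub_one_of_two_lt_card_symmDiff hB hfar hBne hXE hX⟩,
    fun C C' hC hC' hCr hC'r hne =>
      hfar C ((mem_Cr C).2 ⟨hC, hCr⟩) C' ((mem_Cr C').2 ⟨hC', hC'r⟩) hne⟩

end SparsePaving

open scoped Classical in
/-- The edge sets of Hamiltonian cycles of a graph `H` on `r` vertices pairwise differ in at
least 4 edges; consequently they form the set of size-`r` circuits of a sparse paving matroid
of rank `r` on the edge set of `H` (provided some `r`-subset of edges is not a Hamiltonian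
cycle). -/
theorem stmt8 (r : ℕ) (H : SimpleGraph (Fin r)) [DecidableRel H.Adj]
    (Cr : Finset (Finset (Sym2 (Fin r))))
    (hCr : Cr = H.edgeFinset.powerset.filter
      (fun C => ∃ (v : Fin r) (p : H.Walk v v), p.IsHamiltonianCycle ∧ C = p.edges.toFinset))
    (B : Finset (Finset (Sym2 (Fin r))))
    (hB : B = (H.edgeFinset.powersetCard r).filter (fun X => X ∉ Cr))
    (hBne : B.Nonempty) :
    (∀ C ∈ Cr, ∀ C' ∈ Cr, C ≠ C' → 4 ≤ (C ∆ C').card) ∧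
      IsSparsePaving H.edgeFinset r B ∧
      (∀ C : Finset (Sym2 (Fin r)), C ∈ Cr ↔ (Circuit H.edgeFinset B C ∧ C.card = r)) := by
  have mem_Cr : ∀ C, C ∈ Cr ↔ C ⊆ H.edgeFinset ∧
      ∃ (v : Fin r) (p : H.Walk v v), p.IsHamiltonianCycle ∧ C = p.edges.toFinset := fun C => by
    rw [hCr, mem_filter, mem_powerset]
  have mem_B : ∀ X, X ∈ B ↔ X ⊆ H.edgeFinset ∧ #X = r ∧ X ∉ Cr := fun X => by
    rw [hB, mem_filter, mem_powersetCard, and_assoc]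
  have hCrE : ∀ C ∈ Cr, C ⊆ H.edgeFinset ∧ #C = r := fun C hC => by
    obtain ⟨hCE, v, p, hp, rfl⟩ := (mem_Cr C).1 hC
    exact ⟨hCE, by rw [hp.card_edges_toFinset, Fintype.card_fin]⟩
  have hfour : ∀ C ∈ Cr, ∀ C' ∈ Cr, C ≠ C' → 4 ≤ #(C ∆ C') := fun C hC C' hC' hne => by
    obtain ⟨-, v, p, hp, rfl⟩ := (mem_Cr C).1 hC
    obtain ⟨-, v', q, hq, rfl⟩ := (mem_Cr C').1 hC'
    exact hp.four_le_card_symmDiff_edges hq hne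
  have hfar : ∀ C ∈ Cr, ∀ C' ∈ Cr, C ≠ C' → 2 < #(C ∆ C') := fun C hC C' hC' hne => by
    have := hfour C hC C' hC' hne
    omega
  exact ⟨hfour, isSparsePaving_of_two_lt_card_symmDiff mem_B hfar hBne hCrE,
    mem_iff_circuit_and_card_eq_of_two_lt_card_symmDiff mem_B hfar hBne hCrE⟩
end

section
/- Let M be the rank-6 paving matroid on the 24-point ground set E of a Steiner system S(5,8,24) whose size-6 circuits are exactly the 6-subsets contained in some block V with |V ∩ {e,f}| = 1, for fixed distinct e, f ∈ E. Then |B_{ef}| = 7315, |B_{e¬f}| = |B_{¬ef}| = 22638, and |B_{¬e¬f}| = 72149, where B_{xy} partitions the bases by containment of e and f. -/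
/-!
Bases are the 6-subsets of `E` that are not circuits, so each class is a binomial count of
6-subsets with prescribed membership of `e` and `f`, minus the circuits in it. A set of at least
five points lies in at most one block, so circuits can be counted block by block over the blocks
meeting `{e, f}` once. Double counting 5-sets gives 253 blocks through `e` and 77 through `e` and
`f`, hence 176 through `e` but not `f`, each carrying `C(7,5)` circuits through `e`; all 352 such
blocks carry `C(7,6)` circuits avoiding `e` and `f`, and no circuit contains both points.
-/

open scoped symmDiff

variable {α : Type*} [DecidableEq α]

/-- A Steiner system S(5,8,24): a 24-element point set `E` together with a family `V` of
8-element blocks such that every 5-element subset of `E` is contained in exactly one block. -/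
def IsSteiner_5_8_24 (E : Finset α) (V : Finset (Finset α)) : Prop :=
  E.card = 24 ∧ (∀ b ∈ V, b ⊆ E ∧ b.card = 8) ∧
    ∀ S ⊆ E, S.card = 5 → ∃! b, b ∈ V ∧ S ⊆ b

open Finset

section Counting

variable {β : Type*} [DecidableEq β]

lemma card_filter_filter_notMem (U S : Finset β) (p : β → Prop) [DecidablePred p] :
    #{X ∈ {X ∈ U | X ∉ S} | p X} = #{X ∈ U | p X} - #{X ∈ U | p X ∧ X ∈ S} := by
  have hsplit := card_filter_add_card_filter_not (s := {X ∈ U | p X}) (· ∈ S)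
  rw [filter_filter, filter_filter] at hsplit
  rw [filter_filter, filter_congr fun X _ => and_comm]
  omega

variable {s : Finset β} {a c : β} {k : ℕ}

lemma filter_powersetCard_notMem_notMem :
    {X ∈ s.powersetCard k | a ∉ X ∧ c ∉ X} = (s \ {a, c}).powersetCard k := by
  ext X
  simp only [mem_filter, mem_powersetCard, subset_sdiff, disjoint_insert_right,
    disjoint_singleton_right]
  tauto

lemma card_filter_powersetCard_mem_notMem (ha : a ∈ s) (hac : a ≠ c) (hk : 1 ≤ k) :
    #{X ∈ s.powersetCard k | a ∈ X ∧ c ∉ X} = (#(s.erase c) - 1).choose (k - 1) := by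
  have hfilter : {X ∈ s.powersetCard k | a ∈ X ∧ c ∉ X} =
      {X ∈ (s.erase c).powersetCard k | {a} ⊆ X} := by
    ext X
    simp only [mem_filter, mem_powersetCard, subset_erase, singleton_subset_iff]
    tauto
  rw [hfilter, card_filter_powersetCard_subset _ _ _ (by simpa [hac]) (by simpa),
    card_singleton]

lemma card_filter_powersetCard_mem_mem (ha : a ∈ s) (hc : c ∈ s) (hac : a ≠ c) (hk : 2 ≤ k) :
    #{X ∈ s.powersetCard k | a ∈ X ∧ c ∈ X} = (#s - 2).choose (k - 2) := by
  have hfilter : {X ∈ s.powersetCard k | a ∈ X ∧ c ∈ X} =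
      {X ∈ s.powersetCard k | {a, c} ⊆ X} := by
    simp only [insert_subset_iff, singleton_subset_iff]
  rw [hfilter, card_filter_powersetCard_subset _ _ _ (insert_subset ha (by simpa))
    (by rwa [card_pair hac]), card_pair hac]

lemma card_inter_pair_eq_one_iff {b : Finset β} (hac : a ≠ c) :
    #(b ∩ {a, c}) = 1 ↔ (a ∈ b ↔ c ∉ b) := by
  by_cases ha : a ∈ b <;> by_cases hc : c ∈ b <;> simp [ha, hc, hac]

end Counting

namespace IsSteiner_5_8_24

variable {E : Finset α} {V : Finset (Finset α)} (h : IsSteiner_5_8_24 E V)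
include h

omit [DecidableEq α] in
lemma eq_of_subset_of_subset {b₁ b₂ X : Finset α} (hb₁ : b₁ ∈ V) (hb₂ : b₂ ∈ V)
    (hX : 5 ≤ #X) (h₁ : X ⊆ b₁) (h₂ : X ⊆ b₂) : b₁ = b₂ := by
  obtain ⟨S, hSX, hS⟩ := exists_subset_card_eq hX
  obtain ⟨b, -, hunique⟩ := h.2.2 S ((hSX.trans h₁).trans (h.2.1 b₁ hb₁).1) hS
  rw [hunique b₁ ⟨hb₁, hSX.trans h₁⟩, hunique b₂ ⟨hb₂, hSX.trans h₂⟩]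

lemma card_filter_exists_subset_block {W : Finset (Finset α)} (hW : W ⊆ V) {k : ℕ} (hk : 5 ≤ k)
    (p : Finset α → Prop) [DecidablePred p] :
    #{X ∈ E.powersetCard k | p X ∧ ∃ b ∈ W, X ⊆ b} = ∑ b ∈ W, #{X ∈ b.powersetCard k | p X} := by
  have hunion : {X ∈ E.powersetCard k | p X ∧ ∃ b ∈ W, X ⊆ b} =
      W.biUnion fun b => {X ∈ b.powersetCard k | p X} := by
    ext X
    simp only [mem_filter, mem_powersetCard, mem_biUnion]
    constructor
    · rintro ⟨⟨-, hX⟩, hp, b, hb, hXb⟩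
      exact ⟨b, hb, ⟨hXb, hX⟩, hp⟩
    · rintro ⟨b, hb, ⟨hXb, hX⟩, hp⟩
      exact ⟨⟨hXb.trans (h.2.1 b (hW hb)).1, hX⟩, hp, b, hb, hXb⟩
  rw [hunion, card_biUnion]
  intro b₁ hb₁ b₂ hb₂ hne
  simp only [Function.onFun, disjoint_left, mem_filter, mem_powersetCard]
  rintro X ⟨⟨h₁, hX⟩, -⟩ ⟨⟨h₂, -⟩, -⟩
  exact hne (h.eq_of_subset_of_subset (hW hb₁) (hW hb₂) (by omega) h₁ h₂)

lemma card_blocks_superset_mul {P : Finset α} (hP : P ⊆ E) (hP5 : #P ≤ 5) :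
    #{b ∈ V | P ⊆ b} * (8 - #P).choose (5 - #P) = (24 - #P).choose (5 - #P) := by
  have hcount := h.card_filter_exists_subset_block (filter_subset (P ⊆ ·) V) le_rfl (P ⊆ ·)
  have hcover : {X ∈ E.powersetCard 5 | P ⊆ X ∧ ∃ b ∈ {b ∈ V | P ⊆ b}, X ⊆ b} =
      {X ∈ E.powersetCard 5 | P ⊆ X} := by
    refine filter_congr fun X hX => ⟨And.left, fun hPX => ⟨hPX, ?_⟩⟩
    rw [mem_powersetCard] at hX
    obtain ⟨b, ⟨hb, hXb⟩, -⟩ := h.2.2 X hX.1 hX.2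
    exact ⟨b, mem_filter.2 ⟨hb, hPX.trans hXb⟩, hXb⟩
  rw [hcover, card_filter_powersetCard_subset _ _ _ hP hP5, h.1] at hcount
  rw [hcount, sum_congr rfl fun b hb => ?_, sum_const, smul_eq_mul]
  obtain ⟨hb, hPb⟩ := mem_filter.1 hb
  rw [card_filter_powersetCard_subset _ _ _ hPb hP5, (h.2.1 b hb).2]

variable {e f : α}

lemma card_blocks_mem (he : e ∈ E) : #{b ∈ V | e ∈ b} = 253 := by
  have hcount := h.card_blocks_superset_mul (singleton_subset_iff.2 he) (by simp)
  simp only [singleton_subset_iff, card_singleton] at hcount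
  norm_num [Nat.choose] at hcount
  omega

lemma card_blocks_mem_mem (he : e ∈ E) (hf : f ∈ E) (hef : e ≠ f) :
    #{b ∈ V | e ∈ b ∧ f ∈ b} = 77 := by
  have hcount := h.card_blocks_superset_mul (insert_subset he (singleton_subset_iff.2 hf))
    (by rw [card_pair hef]; omega)
  simp only [insert_subset_iff, singleton_subset_iff, card_pair hef] at hcount
  norm_num [Nat.choose] at hcount
  omega

lemma card_blocks_mem_notMem (he : e ∈ E) (hf : f ∈ E) (hef : e ≠ f) :
    #{b ∈ V | e ∈ b ∧ f ∉ b} = 176 := by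
  have hsplit := card_filter_add_card_filter_not (s := {b ∈ V | e ∈ b}) (f ∈ ·)
  rw [filter_filter, filter_filter, h.card_blocks_mem he, h.card_blocks_mem_mem he hf hef] at hsplit
  omega

lemma card_blocks_meeting_pair (he : e ∈ E) (hf : f ∈ E) (hef : e ≠ f) :
    #{b ∈ V | #(b ∩ {e, f}) = 1} = 352 := by
  have hsplit := card_filter_add_card_filter_not (s := {b ∈ V | #(b ∩ {e, f}) = 1}) (e ∈ ·)
  have hwith : {b ∈ V | #(b ∩ {e, f}) = 1 ∧ e ∈ b} = {b ∈ V | e ∈ b ∧ f ∉ b} :=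
    filter_congr fun b _ => by rw [card_inter_pair_eq_one_iff hef]; tauto
  have hwithout : {b ∈ V | #(b ∩ {e, f}) = 1 ∧ e ∉ b} = {b ∈ V | f ∈ b ∧ e ∉ b} :=
    filter_congr fun b _ => by rw [card_inter_pair_eq_one_iff hef]; tauto
  rw [filter_filter, filter_filter, hwith, hwithout, h.card_blocks_mem_notMem he hf hef,
    h.card_blocks_mem_notMem hf he hef.symm] at hsplit
  omega

end IsSteiner_5_8_24

section PavingMatroid

def pavingCircuits (E : Finset α) (V : Finset (Finset α)) (e f : α) : Finset (Finset α) :=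
  {C ∈ E.powersetCard 6 | ∃ b ∈ V, #(b ∩ {e, f}) = 1 ∧ C ⊆ b}

def pavingBases (E : Finset α) (V : Finset (Finset α)) (e f : α) : Finset (Finset α) :=
  {X ∈ E.powersetCard 6 | X ∉ pavingCircuits E V e f}

variable {E : Finset α} {V : Finset (Finset α)} {e f : α}

lemma pavingBases_comm : pavingBases E V e f = pavingBases E V f e := by
  rw [pavingBases, pavingBases, pavingCircuits, pavingCircuits, pair_comm]

lemma card_filter_pavingBases (h : IsSteiner_5_8_24 E V) (p : Finset α → Prop) [DecidablePred p] :
    #{X ∈ pavingBases E V e f | p X} = #{X ∈ E.powersetCard 6 | p X} -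
      ∑ b ∈ V with #(b ∩ {e, f}) = 1, #{X ∈ b.powersetCard 6 | p X} := by
  rw [pavingBases, card_filter_filter_notMem,
    ← h.card_filter_exists_subset_block (filter_subset _ V) (by norm_num) p]
  congr 2
  refine filter_congr fun X hX => ?_
  simp [pavingCircuits, hX, and_assoc]

variable (h : IsSteiner_5_8_24 E V) (he : e ∈ E) (hf : f ∈ E) (hef : e ≠ f)
include h he hf hef

lemma card_pavingBases_mem_mem : #{X ∈ pavingBases E V e f | e ∈ X ∧ f ∈ X} = 7315 := by
  rw [card_filter_pavingBases h, sum_eq_zero, card_filter_powersetCard_mem_mem he hf hef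
    (by norm_num), h.1]
  · rfl
  intro b hb
  rw [mem_filter, card_inter_pair_eq_one_iff hef] at hb
  refine card_eq_zero.2 (filter_eq_empty_iff.2 fun X hX hXef => ?_)
  have hXb := (mem_powersetCard.1 hX).1
  exact hb.2.1 (hXb hXef.1) (hXb hXef.2)

lemma card_pavingBases_mem_notMem : #{X ∈ pavingBases E V e f | e ∈ X ∧ f ∉ X} = 22638 := by
  have hblocks : ∑ b ∈ V with #(b ∩ {e, f}) = 1, #{X ∈ b.powersetCard 6 | e ∈ X ∧ f ∉ X} =
      ∑ b ∈ V with e ∈ b ∧ f ∉ b, 21 := by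
    rw [← sum_filter_of_ne (p := (e ∈ ·)), filter_filter]
    · refine sum_congr (filter_congr fun b _ => ?_) fun b hb => ?_
      · rw [card_inter_pair_eq_one_iff hef]
        tauto
      obtain ⟨hb, heb, hfb⟩ := mem_filter.1 hb
      rw [card_filter_powersetCard_mem_notMem heb hef (by norm_num), erase_eq_of_notMem hfb,
        (h.2.1 b hb).2]
      rfl
    intro b _ hne
    by_contra heb
    refine hne (card_eq_zero.2 (filter_eq_empty_iff.2 fun X hX hXef => heb ?_))
    exact (mem_powersetCard.1 hX).1 hXef.1
  rw [card_filter_pavingBases h, hblocks, sum_const, smul_eq_mul,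
    h.card_blocks_mem_notMem he hf hef, card_filter_powersetCard_mem_notMem he hef (by norm_num),
    card_erase_of_mem hf, h.1]
  rfl

lemma card_pavingBases_notMem_notMem :
    #{X ∈ pavingBases E V e f | e ∉ X ∧ f ∉ X} = 72149 := by
  have hpair : #({e, f} : Finset α) = 2 := card_pair hef
  rw [card_filter_pavingBases h, sum_congr rfl (g := fun _ => 7), sum_const, smul_eq_mul,
    h.card_blocks_meeting_pair he hf hef, filter_powersetCard_notMem_notMem, card_powersetCard,
    card_sdiff_of_subset (insert_subset he (singleton_subset_iff.2 hf)), hpair, h.1]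
  · rfl
  intro b hb
  obtain ⟨hb, hmeet⟩ := mem_filter.1 hb
  rw [filter_powersetCard_notMem_notMem, card_powersetCard, card_sdiff, inter_comm, hmeet,
    (h.2.1 b hb).2]
  rfl

end PavingMatroid

/-- For the rank-6 paving matroid on the 24 points of S(5,8,24) whose size-6 circuits are the
6-subsets contained in some block meeting `{e, f}` in exactly one point, the partition of the
bases by membership of `e` and `f` has sizes 7315, 22638, 22638 and 72149. -/
theorem stmt13 (E : Finset α) (V : Finset (Finset α)) (h : IsSteiner_5_8_24 E V)
    (e f : α) (he : e ∈ E) (hf : f ∈ E) (hef : e ≠ f)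
    (Cr B : Finset (Finset α))
    (hCr : Cr = (E.powersetCard 6).filter
      (fun C => ∃ b ∈ V, (b ∩ ({e, f} : Finset α)).card = 1 ∧ C ⊆ b))
    (hB : B = (E.powersetCard 6).filter (fun X => X ∉ Cr)) :
    (B.filter (fun X => e ∈ X ∧ f ∈ X)).card = 7315 ∧
      (B.filter (fun X => e ∈ X ∧ f ∉ X)).card = 22638 ∧
      (B.filter (fun X => e ∉ X ∧ f ∈ X)).card = 22638 ∧
      (B.filter (fun X => e ∉ X ∧ f ∉ X)).card = 72149 := by
  have hCr' : Cr = pavingCircuits E V e f := hCr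
  have hB' : B = pavingBases E V e f := by rw [hB, hCr']; rfl
  subst hB'
  refine ⟨card_pavingBases_mem_mem h he hf hef, card_pavingBases_mem_notMem h he hf hef, ?_,
    card_pavingBases_notMem_notMem h he hf hef⟩
  rw [pavingBases_comm, filter_congr fun X _ => and_comm]
  exact card_pavingBases_mem_notMem h hf he hef.symm
end

section
/- With the counts |B_{ef}| = 7315, |B_{e¬f}| = |B_{¬ef}| = 22638, |B_{¬e¬f}| = 72149, one has |B_{ef}|·|B_{¬e¬f}| > |B_{e¬f}|·|B_{¬ef}|; specifically 7315·72149 = (89015/86436)·22638², so the events e ∈ X and f ∈ X are positively correlated for X uniform over the bases. -/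
/-- With `|B_ef| = 7315`, `|B_e¬f| = |B_¬ef| = 22638` and `|B_¬e¬f| = 72149` one has
`|B_ef|·|B_¬e¬f| > |B_e¬f|·|B_¬ef|`; specifically `7315·72149 = (89015/86436)·22638²`.
Consequently, for a uniformly random basis `X`, the events `e ∈ X` and `f ∈ X` are
positively correlated: `Pr(e ∈ X ∧ f ∈ X) > Pr(e ∈ X)·Pr(f ∈ X)`. -/
theorem stmt14 {β : Type*} [DecidableEq β] (B Bef Benf Bnef Bnenf : Finset β)
    (hB : B = Bef ∪ Benf ∪ Bnef ∪ Bnenf)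
    (h1 : Disjoint Bef Benf) (h2 : Disjoint Bef Bnef) (h3 : Disjoint Bef Bnenf)
    (h4 : Disjoint Benf Bnef) (h5 : Disjoint Benf Bnenf) (h6 : Disjoint Bnef Bnenf)
    (c1 : Bef.card = 7315) (c2 : Benf.card = 22638) (c3 : Bnef.card = 22638)
    (c4 : Bnenf.card = 72149) :
    Bef.card * Bnenf.card > Benf.card * Bnef.card ∧
      ((7315 * 72149 : ℚ) = (89015 / 86436) * 22638 ^ 2) ∧
      ((Bef.card : ℚ) / B.card >
        (((Bef.card + Benf.card : ℕ) : ℚ) / B.card) *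
          (((Bef.card + Bnef.card : ℕ) : ℚ) / B.card)) := by
  have hBcard : B.card = 124740 := by
    subst hB
    rw [Finset.card_union_of_disjoint (by
          simp [Finset.disjoint_union_left, h3, h5, h6]),
        Finset.card_union_of_disjoint (by
          simp [Finset.disjoint_union_left, h2, h4]),
        Finset.card_union_of_disjoint h1, c1, c2, c3, c4]
  refine ⟨by rw [c1, c2, c3, c4]; norm_num, by norm_num, ?_⟩
  rw [hBcard, c1, c2, c3]
  norm_num
end
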